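/- arXiv:1905.04813 — 7 statements merged into one kernel-verified Lean document; each statement's English description precedes it below -/
import Mathlib

section
/- For every real number x, every α > 0, every τ > 0, and every exponent p with 0 < p < 2, the inequality exp(-|x|^p / α^p) ≥ exp(- x²/(2τ) - ((2-p)/2) · (α²/(p·τ))^(p/(p-2))) holds. -/
/-!
For `q = p / 2 ∈ (0, 1)` the concave map `u ↦ u ^ q` lies below each of its tangent lines. Applied to
`u = x² / α²` at the point `s = A ^ (2 / (p - 2))`, where `A = α² / (p τ)`, the tangent has slope
`q A`, so it becomes `|x| ^ p / α ^ p ≤ x² / (2τ) + (1 - q) A ^ (p / (p - 2))`; exponentiate.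
-/

open Real

namespace Real

theorem rpow_le_tangent_line {q u c : ℝ} (hq₀ : 0 ≤ q) (hq₁ : q ≤ 1) (hu : 0 ≤ u) (hc : 0 < c) :
    u ^ q ≤ q * c ^ (q - 1) * u + (1 - q) * c ^ q := by
  have amgm : u ^ q * c ^ (1 - q) ≤ q * u + (1 - q) * c :=
    geom_mean_le_arith_mean2_weighted hq₀ (by linarith) hu hc.le (by ring)
  have rpow_cancel : c ^ (1 - q) * c ^ (q - 1) = 1 := by
    rw [← rpow_add hc]; norm_num
  have c_mul_rpow : c * c ^ (q - 1) = c ^ q := by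
    rw [mul_comm, ← rpow_add_one hc.ne', sub_add_cancel]
  calc u ^ q = u ^ q * c ^ (1 - q) * c ^ (q - 1) := by rw [mul_assoc, rpow_cancel, mul_one]
    _ ≤ (q * u + (1 - q) * c) * c ^ (q - 1) := by gcongr
    _ = q * c ^ (q - 1) * u + (1 - q) * c ^ q := by rw [← c_mul_rpow]; ring

theorem sq_div_sq_rpow_half (x : ℝ) {α : ℝ} (hα : 0 ≤ α) (p : ℝ) :
    (x ^ 2 / α ^ 2) ^ (p / 2) = |x| ^ p / α ^ p := by
  rw [← sq_abs x, ← div_pow, ← rpow_natCast, ← rpow_mul (div_nonneg (abs_nonneg x) hα),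
    div_rpow (abs_nonneg x) hα]
  norm_num [mul_div_cancel₀ p two_ne_zero]

end Real

theorem generalized_gaussian_variational_lower_bound
    (x α τ p : ℝ) (hα : 0 < α) (hτ : 0 < τ) (hp : 0 < p) (hp2 : p < 2) :
    Real.exp (-(|x| ^ p / α ^ p)) ≥
      Real.exp (-(x ^ 2 / (2 * τ)) - ((2 - p) / 2) * (α ^ 2 / (p * τ)) ^ (p / (p - 2))) := by
  rw [ge_iff_le, exp_le_exp]
  set A := α ^ 2 / (p * τ)
  have hA : 0 < A := by positivity
  have hp2' : p - 2 ≠ 0 := by linarith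
  set s := A ^ (2 / (p - 2))
  have slope : s ^ (p / 2 - 1) = A := by
    rw [← rpow_mul hA.le, show 2 / (p - 2) * (p / 2 - 1) = 1 by field_simp, rpow_one]
  have value : s ^ (p / 2) = A ^ (p / (p - 2)) := by
    rw [← rpow_mul hA.le]; congr 1; field_simp
  have tangent := rpow_le_tangent_line (by linarith : 0 ≤ p / 2) (by linarith)
    (by positivity : 0 ≤ x ^ 2 / α ^ 2) (rpow_pos_of_pos hA (2 / (p - 2)))
  rw [slope, value, sq_div_sq_rpow_half x hα.le] at tangent
  have hslope : p / 2 * A * (x ^ 2 / α ^ 2) = x ^ 2 / (2 * τ) := by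
    simp only [A]; field_simp
  linarith
end

section
/- For every real number x, every α > 0, every τ > 0, and every exponent p with 0 < p < 2, one has |x|^p / α^p ≤ x²/(2τ) + ((2-p)/2) · (α²/(p·τ))^(p/(p-2)). -/
/-!
The map `s ↦ s ^ θ` with `0 < θ < 1` is concave, so it lies below each of its tangent lines
(Bernoulli's inequality). Optimizing the tangent point for a prescribed slope `λ` gives
`s ^ θ ≤ λ s + (1 - θ) (λ / θ) ^ (θ / (θ - 1))`, the Fenchel-conjugate form of the bound.
The theorem is this inequality for `s = x² / α²`, `θ = p / 2` and `λ = α² / (2τ)`.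
-/

open Real

namespace Real

theorem rpow_le_tangent {s c θ : ℝ} (hs : 0 ≤ s) (hc : 0 < c) (hθ₀ : 0 ≤ θ) (hθ₁ : θ ≤ 1) :
    s ^ θ ≤ θ * c ^ (θ - 1) * s + (1 - θ) * c ^ θ := by
  have bernoulli : (s / c) ^ θ ≤ 1 + θ * (s / c - 1) := by
    simpa using rpow_one_add_le_one_add_mul_self (s := s / c - 1)
      (by linarith [div_nonneg hs hc.le]) hθ₀ hθ₁
  calc s ^ θ = c ^ θ * (s / c) ^ θ := by
        rw [← mul_rpow hc.le (div_nonneg hs hc.le), mul_div_cancel₀ s hc.ne']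
    _ ≤ c ^ θ * (1 + θ * (s / c - 1)) := by gcongr
    _ = θ * c ^ (θ - 1) * s + (1 - θ) * c ^ θ := by
        rw [rpow_sub_one hc.ne']
        field_simp
        ring

theorem rpow_le_mul_add_conjugate {s θ l : ℝ} (hs : 0 ≤ s) (hθ₀ : 0 < θ) (hθ₁ : θ < 1)
    (hl : 0 < l) : s ^ θ ≤ l * s + (1 - θ) * (l / θ) ^ (θ / (θ - 1)) := by
  have hb : 0 < l / θ := div_pos hl hθ₀
  have hθ : θ - 1 ≠ 0 := by linarith
  -- the tangent point at which the slope of `s ↦ s ^ θ` equals `l`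
  set c := (l / θ) ^ (1 / (θ - 1)) with hc
  have slope : c ^ (θ - 1) = l / θ := by
    rw [hc, ← rpow_mul hb.le, one_div_mul_cancel hθ, rpow_one]
  have value : c ^ θ = (l / θ) ^ (θ / (θ - 1)) := by
    rw [hc, ← rpow_mul hb.le, one_div_mul_eq_div]
  calc s ^ θ ≤ θ * c ^ (θ - 1) * s + (1 - θ) * c ^ θ :=
        rpow_le_tangent hs (rpow_pos_of_pos hb _) hθ₀.le hθ₁.le
    _ = l * s + (1 - θ) * (l / θ) ^ (θ / (θ - 1)) := by
        rw [slope, value, mul_div_cancel₀ l hθ₀.ne']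

theorem abs_rpow_div_rpow_eq_sq_div_sq_rpow (x : ℝ) {α : ℝ} (hα : 0 < α) (p : ℝ) :
    |x| ^ p / α ^ p = (x ^ 2 / α ^ 2) ^ (p / 2) := by
  rw [div_rpow (sq_nonneg x) (sq_nonneg α), rpow_div_two_eq_sqrt p (sq_nonneg x),
    rpow_div_two_eq_sqrt p (sq_nonneg α), sqrt_sq_eq_abs, sqrt_sq hα.le]

end Real

theorem variational_quadratic_upper_bound
    (x α τ p : ℝ) (hα : 0 < α) (hτ : 0 < τ) (hp : 0 < p) (hp2 : p < 2) :
    |x| ^ p / α ^ p ≤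
      x ^ 2 / (2 * τ) + ((2 - p) / 2) * (α ^ 2 / (p * τ)) ^ (p / (p - 2)) := by
  have bound := rpow_le_mul_add_conjugate (s := x ^ 2 / α ^ 2) (θ := p / 2)
    (l := α ^ 2 / (2 * τ)) (by positivity) (by linarith) (by linarith) (by positivity)
  have hp2' : p - 2 ≠ 0 := by linarith
  rw [abs_rpow_div_rpow_eq_sq_div_sq_rpow x hα]
  convert bound using 3
  · field_simp
  · ring
  · field_simp
end

section
/- Let 0 < p < 2, α > 0, and let x be a nonzero real number. Then equality holds in the bound |x|^p / α^p ≤ x²/(2τ) + ((2-p)/2) · (α²/(p·τ))^(p/(p-2)) precisely when the variational parameter takes the value τ = α^p · |x|^(2-p) / p; in particular, at this value of τ the lower bound of Lemma 1 is attained: exp(-|x|^p/α^p) = exp(- x²/(2τ) - ((2-p)/2)(α²/(pτ))^(p/(p-2))). -/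
open Real

/-!
Put `U = x² / (pτ)` and `V = (α² / (pτ)) ^ (p / (p - 2))`. The right-hand side of the bound is
the weighted arithmetic mean `(p/2) U + ((2-p)/2) V`, while the weighted geometric mean
`U ^ (p/2) V ^ ((2-p)/2)` equals `|x|^p / α^p` whatever `τ` is. So the bound is weighted AM-GM,
with equality exactly when `U = V`, i.e. when `U` is the geometric mean itself, which pins down `τ`.
-/

namespace Real

theorem weighted_arith_mean2_eq_iff_of_geom_mean_eq {w₁ w₂ u v g : ℝ} (hw₁ : 0 < w₁)
    (hw₂ : 0 < w₂) (hw : w₁ + w₂ = 1) (hu : 0 ≤ u) (hv : 0 ≤ v) (hg : 0 < g)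
    (huv : u ^ w₁ * v ^ w₂ = g) :
    w₁ * u + w₂ * v = g ↔ u = g := by
  rw [← huv, eq_comm, geom_mean_eq_arith_mean2_weighted_iff_of_pos hw₁ hw₂ hu hv hw]
  have hmean_self : u ^ w₁ * u ^ w₂ = u := by
    rw [← rpow_add' hu (by linarith), hw, rpow_one]
  constructor
  · rintro rfl
    exact hmean_self.symm
  · intro hu_eq
    have hu_pos : 0 < u := hu_eq ▸ huv ▸ hg
    have hpow : u ^ w₂ = v ^ w₂ := by
      refine mul_left_cancel₀ (rpow_pos_of_pos hu_pos w₁).ne' ?_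
      rw [hmean_self, ← hu_eq]
    exact (rpow_left_inj hu hv hw₂.ne').1 hpow

end Real

theorem sq_div_rpow_half (x s p : ℝ) (hs : 0 ≤ s) :
    (x ^ 2 / s) ^ (p / 2) = |x| ^ p / s ^ (p / 2) := by
  rw [div_rpow (sq_nonneg x) hs, ← sq_abs, ← rpow_natCast, ← rpow_mul (abs_nonneg x)]
  push_cast
  ring_nf

theorem sq_div_rpow_mul_rpow_rpow_eq (x α p s : ℝ) (hα : 0 < α) (hs : 0 < s) (hp : p ≠ 2) :
    (x ^ 2 / s) ^ (p / 2) * ((α ^ 2 / s) ^ (p / (p - 2))) ^ ((2 - p) / 2) = |x| ^ p / α ^ p := by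
  have hexp : p / (p - 2) * ((2 - p) / 2) = -(p / 2) := by
    field_simp [sub_ne_zero.2 hp]
    ring
  rw [← rpow_mul (by positivity), hexp, rpow_neg (by positivity), sq_div_rpow_half x s p hs.le,
    sq_div_rpow_half α s p hs.le, abs_of_pos hα]
  field_simp

theorem sq_div_mul_eq_rpow_div_rpow_iff {x α p τ : ℝ} (hx : x ≠ 0) (hα : 0 < α) (hp : p ≠ 0)
    (hτ : τ ≠ 0) :
    x ^ 2 / (p * τ) = |x| ^ p / α ^ p ↔ τ = α ^ p * |x| ^ (2 - p) / p := by
  have habs : 0 < |x| := abs_pos.2 hx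
  have hsq : x ^ 2 = |x| ^ p * |x| ^ (2 - p) := by
    rw [← rpow_add habs, add_sub_cancel, rpow_two, sq_abs]
  calc x ^ 2 / (p * τ) = |x| ^ p / α ^ p
      ↔ |x| ^ p * (|x| ^ (2 - p) * α ^ p) = |x| ^ p * (τ * p) := by
        rw [div_eq_div_iff (mul_ne_zero hp hτ) (rpow_pos_of_pos hα p).ne', hsq]
        constructor <;> intro h <;> linarith
    _ ↔ |x| ^ (2 - p) * α ^ p = τ * p := mul_right_inj' (rpow_pos_of_pos habs p).ne'
    _ ↔ τ = α ^ p * |x| ^ (2 - p) / p := by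
        rw [eq_div_iff hp]
        constructor <;> intro h <;> linarith

theorem variational_bound_equality_iff_optimal_tau
    (x α p : ℝ) (hx : x ≠ 0) (hα : 0 < α) (hp : 0 < p) (hp2 : p < 2) :
    (∀ τ : ℝ, 0 < τ →
      (|x| ^ p / α ^ p =
          x ^ 2 / (2 * τ) + ((2 - p) / 2) * (α ^ 2 / (p * τ)) ^ (p / (p - 2))
        ↔ τ = α ^ p * |x| ^ (2 - p) / p)) ∧
    Real.exp (-(|x| ^ p / α ^ p)) =
      Real.exp (-(x ^ 2 / (2 * (α ^ p * |x| ^ (2 - p) / p)))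
        - ((2 - p) / 2) *
          (α ^ 2 / (p * (α ^ p * |x| ^ (2 - p) / p))) ^ (p / (p - 2))) := by
  have equality_iff : ∀ τ : ℝ, 0 < τ →
      (|x| ^ p / α ^ p =
          x ^ 2 / (2 * τ) + ((2 - p) / 2) * (α ^ 2 / (p * τ)) ^ (p / (p - 2))
        ↔ τ = α ^ p * |x| ^ (2 - p) / p) := by
    intro τ hτ
    have hsplit : x ^ 2 / (2 * τ) = p / 2 * (x ^ 2 / (p * τ)) := by
      field_simp
    rw [hsplit, eq_comm, Real.weighted_arith_mean2_eq_iff_of_geom_mean_eq (by positivity)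
      (by linarith) (by ring) (by positivity) (by positivity) (by positivity)
      (sq_div_rpow_mul_rpow_rpow_eq x α p (p * τ) hα (by positivity) hp2.ne)]
    exact sq_div_mul_eq_rpow_div_rpow_iff hx hα hp.ne' hτ.ne'
  refine ⟨equality_iff, ?_⟩
  rw [← neg_add', ← (equality_iff _ (by positivity)).2 rfl]
end

section
/- For every real number x, every α > 0, and every exponent p with 0 < p < 2, the supremum over τ > 0 of exp(- x²/(2τ) - ((2-p)/2) · (α²/(p·τ))^(p/(p-2))) equals exp(-|x|^p / α^p). -/
/-!
Writing `E(τ) = x²/(2τ) + ((2-p)/2)(α²/(pτ))^(p/(p-2))`, the weighted AM-GM inequality with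
weights `p/2` and `(2-p)/2` applied to `x²/(pτ)` and `(α²/(pτ))^(p/(p-2))` gives
`E(τ) ≥ |x|^p/α^p`, since the geometric mean does not depend on `τ`. For `x ≠ 0` the two means
coincide exactly when `τ = |x|^(2-p) α^p / p`, where `E(τ) = |x|^p/α^p`; for `x = 0`, `E(τ) → 0`
as `τ → 0⁺` because the exponent `p/(p-2)` is negative.
-/

open Real Filter Topology

noncomputable def variationalExponent (x α p τ : ℝ) : ℝ :=
  x ^ 2 / (2 * τ) + (2 - p) / 2 * (α ^ 2 / (p * τ)) ^ (p / (p - 2))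

lemma sq_rpow_div_two (x p : ℝ) : (x ^ 2) ^ (p / 2) = |x| ^ p := by
  rw [rpow_div_two_eq_sqrt p (sq_nonneg x), sqrt_sq_eq_abs]

lemma sq_eq_rpow_sub_mul_rpow {t : ℝ} (ht : 0 < t) (p : ℝ) : t ^ 2 = t ^ (2 - p) * t ^ p := by
  rw [← rpow_add ht, sub_add_cancel, rpow_two]

section
variable {α p : ℝ}

lemma abs_rpow_div_rpow_le_variationalExponent (x : ℝ) {τ : ℝ} (hα : 0 < α) (hp : 0 < p)
    (hp2 : p < 2) (hτ : 0 < τ) :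
    |x| ^ p / α ^ p ≤ variationalExponent x α p τ := by
  have hpτ : 0 < p * τ := mul_pos hp hτ
  have amgm := geom_mean_le_arith_mean2_weighted (w₁ := p / 2) (w₂ := (2 - p) / 2)
    (p₁ := x ^ 2 / (p * τ)) (p₂ := (α ^ 2 / (p * τ)) ^ (p / (p - 2))) (by positivity)
    (by linarith) (by positivity) (by positivity) (by ring)
  have hgeom : (x ^ 2 / (p * τ)) ^ (p / 2) * ((α ^ 2 / (p * τ)) ^ (p / (p - 2))) ^ ((2 - p) / 2)
      = |x| ^ p / α ^ p := by
    rw [← rpow_mul (by positivity), show p / (p - 2) * ((2 - p) / 2) = -(p / 2) by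
      field_simp [sub_ne_zero.mpr hp2.ne]; ring, rpow_neg (by positivity),
      div_rpow (sq_nonneg x) hpτ.le, div_rpow (sq_nonneg α) hpτ.le, sq_rpow_div_two,
      sq_rpow_div_two, abs_of_pos hα]
    field_simp
  have harith : p / 2 * (x ^ 2 / (p * τ)) = x ^ 2 / (2 * τ) := by
    field_simp
  rwa [hgeom, harith] at amgm

lemma variationalExponent_optimal {x : ℝ} (hx : x ≠ 0) (hα : 0 < α) (hp : 0 < p) (hp2 : p < 2) :
    variationalExponent x α p (|x| ^ (2 - p) * α ^ p / p) = |x| ^ p / α ^ p := by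
  have hxa : 0 < |x| := abs_pos.mpr hx
  have hquad : x ^ 2 / (2 * (|x| ^ (2 - p) * α ^ p / p)) = p / 2 * (|x| ^ p / α ^ p) := by
    rw [← sq_abs, sq_eq_rpow_sub_mul_rpow hxa p]
    field_simp
  have hpen : (α ^ 2 / (p * (|x| ^ (2 - p) * α ^ p / p))) ^ (p / (p - 2)) = |x| ^ p / α ^ p := by
    rw [mul_div_cancel₀ _ hp.ne', sq_eq_rpow_sub_mul_rpow hα p,
      mul_div_mul_right _ _ (rpow_pos_of_pos hα p).ne',
      ← div_rpow hα.le hxa.le, ← rpow_mul (div_pos hα hxa).le,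
      show (2 - p) * (p / (p - 2)) = -p by field_simp [sub_ne_zero.mpr hp2.ne]; ring,
      rpow_neg (div_pos hα hxa).le, ← inv_rpow (div_pos hα hxa).le, inv_div,
      div_rpow hxa.le hα.le]
  rw [variationalExponent, hquad, hpen]
  ring

lemma tendsto_variationalExponent_zero (hα : 0 < α) (hp : 0 < p) (hp2 : p < 2) :
    Tendsto (variationalExponent 0 α p) (𝓝[>] 0) (𝓝 0) := by
  have hinv : Tendsto (fun τ : ℝ => α ^ 2 / (p * τ)) (𝓝[>] 0) atTop := by
    simp_rw [div_mul_eq_div_div, div_eq_mul_inv (α ^ 2 / p)]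
    exact tendsto_inv_nhdsGT_zero.const_mul_atTop (by positivity)
  have hrpow := (tendsto_rpow_neg_atTop (y := p / (2 - p)) (by positivity)).comp hinv
  rw [show -(p / (2 - p)) = p / (p - 2) by rw [← div_neg, neg_sub]] at hrpow
  convert hrpow.const_mul ((2 - p) / 2) using 2 with τ
  · simp [variationalExponent]
  · simp

end

theorem variational_bound_supremum
    (x α p : ℝ) (hα : 0 < α) (hp : 0 < p) (hp2 : p < 2) :
    (⨆ τ : {τ : ℝ // 0 < τ},
        Real.exp (-(x ^ 2 / (2 * (τ : ℝ)))
          - ((2 - p) / 2) * (α ^ 2 / (p * (τ : ℝ))) ^ (p / (p - 2))))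
      = Real.exp (-(|x| ^ p / α ^ p)) := by
  simp_rw [← neg_add', ← variationalExponent.eq_1]
  refine ciSup_eq_of_forall_le_of_forall_lt_exists_gt (fun τ ↦ ?_) fun w hw ↦ ?_
  · exact exp_le_exp.mpr (neg_le_neg (abs_rpow_div_rpow_le_variationalExponent x hα hp hp2 τ.2))
  rcases eq_or_ne x 0 with rfl | hx
  · have hlim := (continuous_exp.tendsto _).comp (tendsto_variationalExponent_zero hα hp hp2).neg
    rw [abs_zero, zero_rpow hp.ne', zero_div] at hw
    obtain ⟨τ, hwτ, hτ⟩ := ((hlim.eventually (lt_mem_nhds hw)).and self_mem_nhdsWithin).exists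
    exact ⟨⟨τ, hτ⟩, hwτ⟩
  · refine ⟨⟨|x| ^ (2 - p) * α ^ p / p, by positivity⟩, ?_⟩
    rwa [variationalExponent_optimal hx hα hp hp2]
end

section
/- Let N be a positive natural number, let 0 < p < 2, α > 0, C > 0, and let x = (x₁,…,x_N) ∈ ℝ^N and λ = (λ₁,…,λ_N) ∈ (0,∞)^N. Then ∏_{i=1}^N (C/α) · exp(-|x_i|^p / α^p) ≥ (C^N / α^N) · exp(-(1/2) ∑_{i=1}^N λ_i x_i²) · exp(- ((2-p)/2) · (α²/p)^(p/(p-2)) · ∑_{i=1}^N λ_i^(p/(p-2))). -/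
/-!
The bound factorises over the components, so it suffices to prove the scalar inequality
`|x|^p / α^p ≤ λ x² / 2 + (2-p)/2 · (α²/p)^(p/(p-2)) · λ^(p/(p-2))`.
This is weighted AM–GM with weights `p/2` and `(2-p)/2` applied to `λ x² / p` and
`(λ α² / p)^(p/(p-2))`, whose weighted geometric mean is exactly `|x|^p / α^p`; equivalently,
the concave function `t ↦ t^(p/2)` lies below its tangent lines.
-/

open Real Finset

theorem abs_rpow_div_rpow_le {p α l : ℝ} (hp : 0 < p) (hp2 : p < 2) (hα : 0 < α) (hl : 0 < l)
    (x : ℝ) :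
    |x| ^ p / α ^ p ≤
      1 / 2 * (l * x ^ 2) + (2 - p) / 2 * ((α ^ 2 / p) ^ (p / (p - 2)) * l ^ (p / (p - 2))) := by
  have hamgm := geom_mean_le_arith_mean2_weighted (w₁ := p / 2) (w₂ := (2 - p) / 2)
    (p₁ := l * x ^ 2 / p) (p₂ := (l * α ^ 2 / p) ^ (p / (p - 2)))
    (by positivity) (by linarith) (by positivity) (by positivity) (by ring)
  have hexp : p / (p - 2) * ((2 - p) / 2) = -(p / 2) := by
    field_simp [(by linarith : p - 2 ≠ 0)]; ring
  have hgeom : (l * x ^ 2 / p) ^ (p / 2) * ((l * α ^ 2 / p) ^ (p / (p - 2))) ^ ((2 - p) / 2)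
      = |x| ^ p / α ^ p := by
    rw [← rpow_mul (by positivity), hexp, rpow_neg (by positivity), ← div_eq_mul_inv,
      ← div_rpow (by positivity) (by positivity)]
    have hratio : l * x ^ 2 / p / (l * α ^ 2 / p) = (|x| / α) ^ (2 : ℝ) := by
      rw [rpow_two, div_pow, sq_abs]; field_simp
    rw [hratio, ← rpow_mul (by positivity), div_rpow (abs_nonneg x) hα.le]
    ring_nf
  have hsplit : (l * α ^ 2 / p) ^ (p / (p - 2)) =
      (α ^ 2 / p) ^ (p / (p - 2)) * l ^ (p / (p - 2)) := by
    rw [← mul_rpow (by positivity) hl.le]; ring_nf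
  rw [hgeom, hsplit] at hamgm
  convert hamgm using 2
  field_simp

theorem pow_card_mul_exp_neg_sum_le_prod {ι : Type*} [Fintype ι] {c : ℝ} (hc : 0 ≤ c)
    {f g : ι → ℝ} (hfg : ∀ i, f i ≤ g i) :
    c ^ Fintype.card ι * exp (-∑ i, g i) ≤ ∏ i, c * exp (-f i) := by
  rw [prod_mul_distrib, prod_const, ← exp_sum, sum_neg_distrib, card_univ]
  gcongr with i
  exact hfg i

theorem generalized_gaussian_density_variational_lower_bound_general
    (N : ℕ) (p α C : ℝ) (hp : 0 < p) (hp2 : p < 2)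
    (hα : 0 < α) (hC : 0 < C)
    (x : Fin N → ℝ) (l : Fin N → ℝ) (hl : ∀ i, 0 < l i) :
    (∏ i : Fin N, (C / α) * Real.exp (-(|x i| ^ p / α ^ p))) ≥
      (C ^ N / α ^ N) *
        Real.exp (-(1 / 2) * ∑ i : Fin N, l i * (x i) ^ 2) *
        Real.exp (-((2 - p) / 2) * (α ^ 2 / p) ^ (p / (p - 2)) *
          ∑ i : Fin N, (l i) ^ (p / (p - 2))) := by
  have hsum : -(1 / 2) * ∑ i, l i * x i ^ 2 +
      -((2 - p) / 2) * (α ^ 2 / p) ^ (p / (p - 2)) * ∑ i, l i ^ (p / (p - 2)) =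
      -∑ i, (1 / 2 * (l i * x i ^ 2) +
        (2 - p) / 2 * ((α ^ 2 / p) ^ (p / (p - 2)) * l i ^ (p / (p - 2)))) := by
    rw [sum_add_distrib, ← mul_sum, ← mul_sum, ← mul_sum]; ring
  rw [mul_assoc, ← exp_add, hsum, ← div_pow, ge_iff_le]
  simpa only [Fintype.card_fin] using pow_card_mul_exp_neg_sum_le_prod (div_pos hC hα).le
    fun i ↦ abs_rpow_div_rpow_le hp hp2 hα (hl i) (x i)

theorem generalized_gaussian_density_variational_lower_bound
    (N : ℕ) (hN : 0 < N) (p α C : ℝ) (hp : 0 < p) (hp2 : p < 2)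
    (hα : 0 < α) (hC : 0 < C)
    (x : Fin N → ℝ) (l : Fin N → ℝ) (hl : ∀ i, 0 < l i) :
    (∏ i : Fin N, (C / α) * Real.exp (-(|x i| ^ p / α ^ p))) ≥
      (C ^ N / α ^ N) *
        Real.exp (-(1 / 2) * ∑ i : Fin N, l i * (x i) ^ 2) *
        Real.exp (-((2 - p) / 2) * (α ^ 2 / p) ^ (p / (p - 2)) *
          ∑ i : Fin N, (l i) ^ (p / (p - 2))) :=
  generalized_gaussian_density_variational_lower_bound_general N p α C hp hp2 hα hC x l hl
end

section
/- Let N be a positive natural number, let 0 < p < 2, α > 0, and let x ∈ ℝ^N and λ ∈ (0,∞)^N. Then ∑_{i=1}^N |x_i|^p / α^p ≤ (1/2) ∑_{i=1}^N λ_i x_i² + ((2-p)/2) · (α²/p)^(p/(p-2)) · ∑_{i=1}^N λ_i^(p/(p-2)). -/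
open Real Finset

/-- Weighted AM-GM with weights `p/2` and `(2-p)/2`, applied to
`L X² / p` and `(α² L / p)^(p/(p-2))`, whose weighted geometric mean is `(|X|/α)^p`. -/
theorem abs_rpow_div_rpow_le_half_mul_sq_add {p α L : ℝ} (hp : 0 < p) (hp2 : p < 2)
    (hα : 0 < α) (hL : 0 < L) (X : ℝ) :
    |X| ^ p / α ^ p ≤ 1 / 2 * (L * X ^ 2) + (2 - p) / 2 * (α ^ 2 / p * L) ^ (p / (p - 2)) := by
  set c := α ^ 2 / p * L with hc_def
  have hc : 0 < c := by positivity
  have hratio : L * X ^ 2 / p / c = (|X| / α) ^ 2 := by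
    rw [hc_def, div_pow, sq_abs]
    field_simp
  have hexp : p / (p - 2) * ((2 - p) / 2) = -(p / 2) := by
    field_simp [show p - 2 ≠ 0 by linarith]
    ring
  have hgeom : (L * X ^ 2 / p) ^ (p / 2) * (c ^ (p / (p - 2))) ^ ((2 - p) / 2)
      = |X| ^ p / α ^ p := by
    rw [← rpow_mul hc.le, hexp, rpow_neg hc.le, ← div_eq_mul_inv,
      ← div_rpow (by positivity) hc.le, hratio, ← rpow_two, ← rpow_mul (by positivity),
      div_rpow (abs_nonneg X) hα.le]
    rw [mul_div_cancel₀ p two_ne_zero]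
  calc |X| ^ p / α ^ p
      = (L * X ^ 2 / p) ^ (p / 2) * (c ^ (p / (p - 2))) ^ ((2 - p) / 2) := hgeom.symm
    _ ≤ p / 2 * (L * X ^ 2 / p) + (2 - p) / 2 * c ^ (p / (p - 2)) :=
        geom_mean_le_arith_mean2_weighted (by linarith) (by linarith) (by positivity)
          (by positivity) (by ring)
    _ = 1 / 2 * (L * X ^ 2) + (2 - p) / 2 * c ^ (p / (p - 2)) := by
        field_simp

theorem lp_penalty_variational_quadratic_upper_bound_general
    (N : ℕ) (p α : ℝ) (hp : 0 < p) (hp2 : p < 2) (hα : 0 < α)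
    (x : Fin N → ℝ) (l : Fin N → ℝ) (hl : ∀ i, 0 < l i) :
    (∑ i : Fin N, |x i| ^ p / α ^ p) ≤
      (1 / 2) * ∑ i : Fin N, l i * (x i) ^ 2 +
        ((2 - p) / 2) * (α ^ 2 / p) ^ (p / (p - 2)) *
          ∑ i : Fin N, (l i) ^ (p / (p - 2)) := by
  rw [mul_sum, mul_sum, ← sum_add_distrib]
  refine sum_le_sum fun i _ => ?_
  calc |x i| ^ p / α ^ p
      ≤ 1 / 2 * (l i * x i ^ 2) + (2 - p) / 2 * (α ^ 2 / p * l i) ^ (p / (p - 2)) :=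
        abs_rpow_div_rpow_le_half_mul_sq_add hp hp2 hα (hl i) (x i)
    _ = 1 / 2 * (l i * x i ^ 2) +
        (2 - p) / 2 * (α ^ 2 / p) ^ (p / (p - 2)) * l i ^ (p / (p - 2)) := by
        rw [mul_rpow (by positivity) (hl i).le]
        ring

theorem lp_penalty_variational_quadratic_upper_bound
    (N : ℕ) (hN : 0 < N) (p α : ℝ) (hp : 0 < p) (hp2 : p < 2) (hα : 0 < α)
    (x : Fin N → ℝ) (l : Fin N → ℝ) (hl : ∀ i, 0 < l i) :
    (∑ i : Fin N, |x i| ^ p / α ^ p) ≤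
      (1 / 2) * ∑ i : Fin N, l i * (x i) ^ 2 +
        ((2 - p) / 2) * (α ^ 2 / p) ^ (p / (p - 2)) *
          ∑ i : Fin N, (l i) ^ (p / (p - 2)) :=
  lp_penalty_variational_quadratic_upper_bound_general N p α hp hp2 hα x l hl
end

section
/- Let N be a positive natural number, let 0 < p < 2, α > 0, C > 0, and let x ∈ ℝ^N be a vector all of whose components are nonzero. Then the supremum over λ ∈ (0,∞)^N of (C^N/α^N) · exp(-(1/2) ∑_i λ_i x_i²) · exp(-((2-p)/2)(α²/p)^(p/(p-2)) ∑_i λ_i^(p/(p-2))) equals the generalized Gaussian density ∏_i (C/α) exp(-|x_i|^p/α^p), and this supremum is attained at λ_i = p / (α^p |x_i|^(2-p)). -/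
/-!
For `0 < p < 2` the power `a ^ p = (a ^ 2) ^ (p / 2)` is a concave function of `a ^ 2`, hence the
lower envelope of its tangent lines: with weights `p / 2` and `(2 - p) / 2`, weighted AM-GM gives
`a ^ p ≤ p / 2 * s * a ^ 2 + (2 - p) / 2 * s ^ (p / (p - 2))` for every `s > 0`, with equality at
`s = a ^ (p - 2)`. After the substitution `s = α ^ 2 / p * λᵢ`, `a = |xᵢ| / α`, the exponent of the
variational bound splits into a sum of these majorants, one per coordinate, so the bound is below
the density for every `λ` and equal to it at `λᵢ = p / (α ^ p * |xᵢ| ^ (2 - p))`.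
-/

open Real Finset

noncomputable section

def quadraticMajorant (p s a : ℝ) : ℝ :=
  p / 2 * (s * a ^ 2) + (2 - p) / 2 * s ^ (p / (p - 2))

theorem rpow_le_quadraticMajorant {p s a : ℝ} (hp : 0 < p) (hp2 : p < 2) (ha : 0 ≤ a)
    (hs : 0 < s) : a ^ p ≤ quadraticMajorant p s a := by
  have hexp : p / 2 + p / (p - 2) * ((2 - p) / 2) = 0 := by
    field_simp [(by linarith : p - 2 ≠ 0)]
    ring
  have hgeom : (s * a ^ 2) ^ (p / 2) * (s ^ (p / (p - 2))) ^ ((2 - p) / 2) = a ^ p := by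
    rw [mul_rpow hs.le (by positivity), ← rpow_two, ← rpow_mul ha, ← rpow_mul hs.le,
      mul_right_comm, ← rpow_add hs, hexp, rpow_zero, one_mul]
    ring_nf
  calc a ^ p = _ := hgeom.symm
    _ ≤ quadraticMajorant p s a :=
      geom_mean_le_arith_mean2_weighted (by linarith) (by linarith) (by positivity)
        (by positivity) (by ring)

theorem quadraticMajorant_rpow_sub_two {p a : ℝ} (hp2 : p ≠ 2) (ha : 0 < a) :
    quadraticMajorant p (a ^ (p - 2)) a = a ^ p := by
  have htangent : a ^ (p - 2) * a ^ 2 = a ^ p := by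
    rw [← rpow_two, ← rpow_add ha, sub_add_cancel]
  have hdual : (a ^ (p - 2)) ^ (p / (p - 2)) = a ^ p := by
    rw [← rpow_mul ha.le, mul_div_cancel₀ _ (sub_ne_zero.mpr hp2)]
  rw [quadraticMajorant, htangent, hdual]
  ring

theorem half_mul_sq_add_rpow_eq_quadraticMajorant {p α l : ℝ} (hp : 0 < p) (hα : 0 < α)
    (hl : 0 ≤ l) (x : ℝ) :
    1 / 2 * l * x ^ 2 + (2 - p) / 2 * (α ^ 2 / p) ^ (p / (p - 2)) * l ^ (p / (p - 2))
      = quadraticMajorant p (α ^ 2 / p * l) (|x| / α) := by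
  rw [quadraticMajorant, mul_rpow (by positivity) hl, div_pow, sq_abs]
  field_simp

theorem sq_div_mul_div_rpow_mul_abs_rpow {p α x : ℝ} (hp : 0 < p) (hα : 0 < α) (hx : x ≠ 0) :
    α ^ 2 / p * (p / (α ^ p * |x| ^ (2 - p))) = (|x| / α) ^ (p - 2) := by
  have hx' : 0 < |x| := abs_pos.mpr hx
  rw [div_rpow hx'.le hα.le, rpow_sub hx' 2 p, rpow_sub hx' p 2, rpow_sub hα p 2, rpow_two,
    rpow_two]
  field_simp

variable {N : ℕ}

def variationalBound (p α C : ℝ) (x l : Fin N → ℝ) : ℝ :=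
  (C ^ N / α ^ N) * exp (-(1 / 2) * ∑ i, l i * x i ^ 2) *
    exp (-((2 - p) / 2) * (α ^ 2 / p) ^ (p / (p - 2)) * ∑ i, l i ^ (p / (p - 2)))

theorem variationalBound_eq_prod (p α C : ℝ) (x l : Fin N → ℝ) :
    variationalBound p α C x l = ∏ i, C / α * exp (-(1 / 2 * l i * x i ^ 2 +
      (2 - p) / 2 * (α ^ 2 / p) ^ (p / (p - 2)) * l i ^ (p / (p - 2)))) := by
  rw [variationalBound, prod_mul_distrib, prod_const, card_univ, Fintype.card_fin, div_pow,
    mul_assoc, ← exp_add, ← exp_sum]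
  congr 2
  simp only [sum_neg_distrib, sum_add_distrib, mul_assoc, ← mul_sum]
  ring

end

theorem generalized_gaussian_variational_bound_tight_general
    (N : ℕ) (p α C : ℝ) (hp : 0 < p) (hp2 : p < 2)
    (hα : 0 < α) (hC : 0 < C)
    (x : Fin N → ℝ) (hx : ∀ i, x i ≠ 0) :
    (⨆ l : Fin N → {t : ℝ // 0 < t},
        (C ^ N / α ^ N) *
          Real.exp (-(1 / 2) * ∑ i : Fin N, (l i : ℝ) * (x i) ^ 2) *
          Real.exp (-((2 - p) / 2) * (α ^ 2 / p) ^ (p / (p - 2)) *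
            ∑ i : Fin N, ((l i : ℝ)) ^ (p / (p - 2))))
      = ∏ i : Fin N, (C / α) * Real.exp (-(|x i| ^ p / α ^ p)) ∧
    (C ^ N / α ^ N) *
        Real.exp (-(1 / 2) * ∑ i : Fin N,
          (p / (α ^ p * |x i| ^ (2 - p))) * (x i) ^ 2) *
        Real.exp (-((2 - p) / 2) * (α ^ 2 / p) ^ (p / (p - 2)) *
          ∑ i : Fin N, (p / (α ^ p * |x i| ^ (2 - p))) ^ (p / (p - 2)))
      = ∏ i : Fin N, (C / α) * Real.exp (-(|x i| ^ p / α ^ p)) := by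
  have hopt : ∀ i, 0 < p / (α ^ p * |x i| ^ (2 - p)) := fun i => by
    have := abs_pos.mpr (hx i)
    positivity
  have hle : ∀ l : Fin N → {t : ℝ // 0 < t},
      variationalBound p α C x (fun i => l i) ≤ ∏ i, C / α * exp (-(|x i| ^ p / α ^ p)) := by
    intro l
    rw [variationalBound_eq_prod]
    gcongr with i
    rw [half_mul_sq_add_rpow_eq_quadraticMajorant hp hα (l i).2.le, ← div_rpow (abs_nonneg _) hα.le]
    exact rpow_le_quadraticMajorant hp hp2 (by positivity) (mul_pos (by positivity) (l i).2)
  have heq : variationalBound p α C x (fun i => p / (α ^ p * |x i| ^ (2 - p)))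
      = ∏ i, C / α * exp (-(|x i| ^ p / α ^ p)) := by
    rw [variationalBound_eq_prod]
    refine prod_congr rfl fun i _ => ?_
    have hxi : 0 < |x i| := abs_pos.mpr (hx i)
    rw [half_mul_sq_add_rpow_eq_quadraticMajorant hp hα (hopt i).le,
      sq_div_mul_div_rpow_mul_abs_rpow hp hα (hx i),
      quadraticMajorant_rpow_sub_two hp2.ne (by positivity), div_rpow hxi.le hα.le]
  have : Nonempty (Fin N → {t : ℝ // 0 < t}) := ⟨fun i => ⟨_, hopt i⟩⟩
  exact ⟨ciSup_eq_of_forall_le_of_forall_lt_exists_gt hle fun w hw =>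
    ⟨fun i => ⟨_, hopt i⟩, hw.trans_eq heq.symm⟩, heq⟩

theorem generalized_gaussian_variational_bound_tight
    (N : ℕ) (hN : 0 < N) (p α C : ℝ) (hp : 0 < p) (hp2 : p < 2)
    (hα : 0 < α) (hC : 0 < C)
    (x : Fin N → ℝ) (hx : ∀ i, x i ≠ 0) :
    (⨆ l : Fin N → {t : ℝ // 0 < t},
        (C ^ N / α ^ N) *
          Real.exp (-(1 / 2) * ∑ i : Fin N, (l i : ℝ) * (x i) ^ 2) *
          Real.exp (-((2 - p) / 2) * (α ^ 2 / p) ^ (p / (p - 2)) *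
            ∑ i : Fin N, ((l i : ℝ)) ^ (p / (p - 2))))
      = ∏ i : Fin N, (C / α) * Real.exp (-(|x i| ^ p / α ^ p)) ∧
    (C ^ N / α ^ N) *
        Real.exp (-(1 / 2) * ∑ i : Fin N,
          (p / (α ^ p * |x i| ^ (2 - p))) * (x i) ^ 2) *
        Real.exp (-((2 - p) / 2) * (α ^ 2 / p) ^ (p / (p - 2)) *
          ∑ i : Fin N, (p / (α ^ p * |x i| ^ (2 - p))) ^ (p / (p - 2)))
      = ∏ i : Fin N, (C / α) * Real.exp (-(|x i| ^ p / α ^ p)) :=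
  generalized_gaussian_variational_bound_tight_general N p α C hp hp2 hα hC x hx
end
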